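/- For 0 < c·ε < 1/2 and integer n ≥ 2, the Kullback–Leibler divergence between the Bernoulli distribution with success probability (1 + cε)/n and the Bernoulli distribution with success probability (1 − cε)/n is at most 10·c²·ε²/n. -/

import Mathlib

lemma kl_aux (x m : ℝ) (hx0 : 0 < x) (hxlt : x < 1 / 2) (hm : 1 ≤ m) :
    (1 + x) * Real.log ((1 + x) / (1 - x))
      + (m - x) * Real.log ((m - x) / (m + x)) ≤ 10 * x ^ 2 := by
  have h1x : 0 < 1 - x := by linarith
  have h1x' : 0 < 1 + x := by linarith
  have hmx : 0 < m - x := by linarith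
  have hmx' : 0 < m + x := by linarith
  have hlog1 : Real.log (1 + x) ≤ x := by
    have := Real.log_le_sub_one_of_pos h1x'
    linarith
  have hlog2 : -(x / (1 - x)) ≤ Real.log (1 - x) := by
    have h := Real.log_le_sub_one_of_pos (x := (1 - x)⁻¹) (by positivity)
    rw [Real.log_inv] at h
    have he : (1 - x)⁻¹ - 1 = x / (1 - x) := by field_simp; ring
    linarith [he ▸ h]
  have hL1 : Real.log ((1 + x) / (1 - x)) ≤ x + x / (1 - x) := by
    rw [Real.log_div (by linarith) (by linarith)]
    linarith
  have hL2 : Real.log ((m - x) / (m + x)) ≤ (m - x) / (m + x) - 1 :=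
    Real.log_le_sub_one_of_pos (by positivity)
  have hA : (1 + x) * Real.log ((1 + x) / (1 - x)) ≤ (1 + x) * (x + x / (1 - x)) :=
    mul_le_mul_of_nonneg_left hL1 (by linarith)
  have hB : (m - x) * Real.log ((m - x) / (m + x)) ≤ (m - x) * ((m - x) / (m + x) - 1) :=
    mul_le_mul_of_nonneg_left hL2 (le_of_lt hmx)
  have hB2 : (m - x) * ((m - x) / (m + x) - 1) ≤ -(2 * x * (1 - x) / (1 + x)) := by
    have hq : 2 * x * (1 - x) / (1 + x) ≤ 2 * x * (m - x) / (m + x) := by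
      rw [div_le_div_iff₀ h1x' hmx']
      have hd : 2 * x * (m - x) * (1 + x) - 2 * x * (1 - x) * (m + x)
          = 4 * x ^ 2 * (m - 1) := by ring
      have : 0 ≤ 4 * x ^ 2 * (m - 1) := mul_nonneg (by positivity) (by linarith)
      linarith
    have heq : (m - x) * ((m - x) / (m + x) - 1) = -(2 * x * (m - x) / (m + x)) := by
      field_simp; ring
    linarith [heq ▸ le_refl ((m - x) * ((m - x) / (m + x) - 1))]
  have hA2 : (1 + x) * (x + x / (1 - x)) ≤ 10 * x ^ 2 + 2 * x * (1 - x) / (1 + x) := by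
    have e1 : (1 + x) * (x + x / (1 - x)) = x * ((1 + x) * (2 - x)) / (1 - x) := by
      field_simp; ring
    have e2 : 10 * x ^ 2 + 2 * x * (1 - x) / (1 + x)
        = (10 * x ^ 2 * (1 + x) + 2 * x * (1 - x)) / (1 + x) := by
      field_simp
    rw [e1, e2, div_le_div_iff₀ h1x h1x']
    have h9 : x ^ 2 < 1 / 4 := by nlinarith
    have hdiff : (10 * x ^ 2 * (1 + x) + 2 * x * (1 - x)) * (1 - x)
        - x * ((1 + x) * (2 - x)) * (1 + x) = x ^ 2 * (3 + 2 * x - 9 * x ^ 2) := by ring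
    have hpos : 0 ≤ x ^ 2 * (3 + 2 * x - 9 * x ^ 2) :=
      mul_nonneg (sq_nonneg x) (by nlinarith)
    linarith
  linarith

theorem kl_bernoulli_bound (c ε : ℝ) (n : ℕ) (hn : 2 ≤ n)
    (h0 : 0 < c * ε) (h1 : c * ε < 1 / 2) :
    ((1 + c * ε) / n) * Real.log ((1 + c * ε) / (1 - c * ε))
      + (((n : ℝ) - 1 - c * ε) / n) *
          Real.log (((n : ℝ) - 1 - c * ε) / ((n : ℝ) - 1 + c * ε))
    ≤ 10 * c ^ 2 * ε ^ 2 / n := by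
  have hn1 : (2:ℝ) ≤ (n:ℝ) := by exact_mod_cast hn
  have hn0 : (0:ℝ) < n := by linarith
  have key := kl_aux (c * ε) ((n:ℝ) - 1) h0 h1 (by linarith)
  have hgoal : ((1 + c * ε) / n) * Real.log ((1 + c * ε) / (1 - c * ε))
      + (((n : ℝ) - 1 - c * ε) / n) *
          Real.log (((n : ℝ) - 1 - c * ε) / ((n : ℝ) - 1 + c * ε))
      = ((1 + c * ε) * Real.log ((1 + c * ε) / (1 - c * ε))
        + (((n : ℝ) - 1) - c * ε) *
            Real.log ((((n : ℝ) - 1) - c * ε) / (((n : ℝ) - 1) + c * ε))) / n := by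
    ring_nf
  have hrhs : 10 * c ^ 2 * ε ^ 2 / n = (10 * (c * ε) ^ 2) / n := by ring
  rw [hgoal, hrhs]
  gcongr
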